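/- Consider the function f(p) = (1 − p)/(p (log p)^2) defined for p ∈ (0, 1). Then f attains a global minimum on (0, 1) at some point p*, and every global minimizer p* of f on (0, 1) satisfies 0.1 < p* < 0.3. -/
import Mathlib

open Real Set

/-- Basic bound: for `1 ≤ t`, `log t ≤ (t - t⁻¹)/2` (via `x ≤ sinh x`). -/
lemma logB {t : ℝ} (ht : 1 ≤ t) : Real.log t ≤ (t - t⁻¹) / 2 := by
  have h0 : 0 < t := lt_of_lt_of_le one_pos ht
  have h1 : Real.log t ≤ Real.sinh (Real.log t) :=
    (Real.self_le_sinh_iff).mpr (Real.log_nonneg ht)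
  have h2 : Real.sinh (Real.log t) = (t - t⁻¹) / 2 := by
    rw [Real.sinh_eq, Real.exp_log h0, ← Real.log_inv, Real.exp_log (by positivity)]
  linarith [h1, h2.le]

/-- For `0 < v ≤ 1`, `-log v ≤ (v⁻¹ - v)/2`. -/
lemma neg_logB {v : ℝ} (h0 : 0 < v) (h1 : v ≤ 1) : -Real.log v ≤ (v⁻¹ - v) / 2 := by
  have := logB (one_le_inv₀ h0 |>.mpr h1)
  rwa [Real.log_inv, inv_inv] at this

/-- numeric bound on `log 5` -/
lemma log5_lb : (1.609:ℝ) < Real.log 5 := by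
  have h2 : (0.6931471803:ℝ) < Real.log 2 := Real.log_two_gt_d9
  have hpow : ((2:ℝ)^(65:ℕ)) < (5:ℝ)^(28:ℕ) := by norm_num
  have hlog : (65:ℝ) * Real.log 2 < 28 * Real.log 5 := by
    have := Real.log_lt_log (by positivity) hpow
    rwa [Real.log_pow, Real.log_pow] at this
  nlinarith

/-- Bound on the denominator, in terms of the eighth root `v` and fourth root `u` of `q`. -/
lemma Dbound {q u v : ℝ} (h0 : 0 < q) (h1 : q < 1) (hv : 0 < v) (hv2 : v ^ 2 = u)
    (hu4 : u ^ 4 = q) : q * (Real.log q) ^ 2 ≤ 16 * u ^ 3 * (1 - u) ^ 2 := by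
  have hv8 : v ^ 8 = q := by rw [show v^8 = (v^2)^4 by ring, hv2, hu4]
  have hvlt : v < 1 := by
    by_contra hcon
    push_neg at hcon
    have h8 := pow_le_pow_left₀ (zero_le_one) hcon 8
    rw [hv8, one_pow] at h8
    linarith
  have hupos : 0 < u := by rw [← hv2]; positivity
  have hlogq : Real.log q = 8 * Real.log v := by
    rw [← hv8, Real.log_pow]; push_cast; ring
  have hnl : -Real.log q ≤ 4 * ((1 - u) / v) := by
    have hb := neg_logB hv hvlt.le
    have hinv : v⁻¹ = (1 - u)/v + v := by
      rw [← hv2]; field_simp; ring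
    rw [hinv] at hb
    rw [hlogq]
    linarith
  have hnlpos : 0 ≤ -Real.log q := by
    have := Real.log_nonpos h0.le h1.le; linarith
  have hsq : (Real.log q) ^ 2 ≤ (4 * ((1 - u) / v)) ^ 2 := by
    nlinarith [hnl, hnlpos]
  have h4 : (4 * ((1 - u) / v)) ^ 2 = 16 * (1 - u)^2 / v^2 := by
    field_simp; ring
  calc q * (Real.log q)^2 ≤ v^8 * (16 * (1 - u)^2 / v^2) := by
        rw [hv8]; nlinarith [hsq, h4, h0]
    _ = 16 * (v^2)^3 * (1 - u) ^ 2 := by field_simp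
    _ = 16 * u ^ 3 * (1 - u) ^ 2 := by rw [hv2]

/-- The core inequality, with the fourth root `u` abstracted. -/
lemma core_ineq {q u L : ℝ} (h0 : 0 < q) (h1 : q < 1) (hupos : 0 < u) (hu4 : u ^ 4 = q)
    (hD : q * (Real.log q) ^ 2 ≤ 16 * u ^ 3 * (1 - u) ^ 2)
    (hDpos : 0 < q * (Real.log q) ^ 2)
    (hLpos : (2.588:ℝ) < L) (h : q ≤ 0.1 ∨ 0.3 ≤ q) :
    4 / L < (1 - q) / (q * (Real.log q) ^ 2) := by
  have hult : u < 1 := by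
    by_contra hcon
    push_neg at hcon
    have h8 := pow_le_pow_left₀ (zero_le_one) hcon 4
    rw [hu4, one_pow] at h8
    linarith
  have h1u : 0 < 1 - u := by linarith
  have hEpos : 0 < 16 * u ^ 3 * (1 - u) ^ 2 :=
    mul_pos (by positivity) (pow_pos h1u 2)
  have hpoly : 64*u^3 - 64*u^4 < 2.588*(1 + u + u^2 + u^3) := by
    rcases h with hle | hge
    · have hub : u < 0.5624 := by
        by_contra hcon
        push_neg at hcon
        have h4 : (0.5624:ℝ)^4 ≤ u^4 := pow_le_pow_left₀ (by norm_num) hcon 4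
        rw [hu4] at h4
        norm_num at h4
        linarith
      nlinarith [sq_nonneg u, sq_nonneg (u - 0.5), mul_pos hupos hupos,
        sq_nonneg (u-0.5624), mul_nonneg (mul_nonneg hupos.le hupos.le) hupos.le]
    · have hub : (0.74:ℝ) < u := by
        by_contra hcon
        push_neg at hcon
        have h4 : u^4 ≤ (0.74:ℝ)^4 := pow_le_pow_left₀ hupos.le hcon 4
        rw [hu4] at h4
        norm_num at h4
        linarith
      nlinarith [sq_nonneg (u - 0.87), mul_pos (sub_pos.mpr hub) (sub_pos.mpr hult),
        sq_nonneg (u-0.74), sq_nonneg (u-1)]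
  have hkey : 4 * (16 * u ^ 3 * (1 - u) ^ 2) < (1 - q) * L := by
    have hfact : (1 - q) = (1 - u) * ((1+u)*(1+u^2)) := by rw [← hu4]; ring
    rw [hfact]
    have hstep : 64*u^3*(1-u) < L * ((1+u)*(1+u^2)) := by
      have hposu : 0 < (1+u)*(1+u^2) := by positivity
      nlinarith [hpoly, hLpos, hposu]
    nlinarith [mul_lt_mul_of_pos_left hstep h1u]
  calc (4:ℝ) / L < (1 - q) / (16 * u ^ 3 * (1 - u) ^ 2) := by
        rw [div_lt_div_iff₀ (by nlinarith) hEpos]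
        nlinarith [hkey]
    _ ≤ (1 - q) / (q * (Real.log q) ^ 2) := by
        apply div_le_div_of_nonneg_left (by nlinarith [hu4]) hDpos hD

/-- key: outside `(0.1, 0.3)`, `f q > f 0.2`. -/
lemma outside_gt {q : ℝ} (h0 : 0 < q) (h1 : q < 1) (h : q ≤ 0.1 ∨ 0.3 ≤ q) :
    (1 - 0.2) / (0.2 * (Real.log 0.2) ^ 2) < (1 - q) / (q * (Real.log q) ^ 2) := by
  have hL : Real.log 0.2 = -Real.log 5 := by
    rw [show (0.2:ℝ) = 5⁻¹ by norm_num, Real.log_inv]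
  have hL5 : (1.609:ℝ) < Real.log 5 := log5_lb
  have hLHS : (1 - 0.2) / (0.2 * (Real.log 0.2) ^ 2) = 4 / (Real.log 5) ^ 2 := by
    rw [hL]; ring_nf
  rw [hLHS]
  have hLpos : (2.588:ℝ) < Real.log 5 ^ 2 := by nlinarith
  have hspos : 0 < Real.sqrt q := Real.sqrt_pos.mpr h0
  have hupos : 0 < Real.sqrt (Real.sqrt q) := Real.sqrt_pos.mpr hspos
  have hvpos : 0 < Real.sqrt (Real.sqrt (Real.sqrt q)) := Real.sqrt_pos.mpr hupos
  have hv2 : (Real.sqrt (Real.sqrt (Real.sqrt q))) ^ 2 = Real.sqrt (Real.sqrt q) :=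
    Real.sq_sqrt hupos.le
  have hu4 : (Real.sqrt (Real.sqrt q)) ^ 4 = q := by
    rw [show ∀ x:ℝ, x^4 = (x^2)^2 from fun x => by ring,
      Real.sq_sqrt hspos.le, Real.sq_sqrt h0.le]
  have hlogq_ne : Real.log q ≠ 0 := by
    have := Real.log_neg h0 h1; linarith
  have hDpos : 0 < q * (Real.log q) ^ 2 := by positivity
  exact core_ineq h0 h1 hupos hu4 (Dbound h0 h1 hvpos hv2 hu4) hDpos hLpos h

/-- The function `f(p) = (1 − p)/(p (log p)²)` on `(0, 1)` attains a global minimum, and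
every global minimizer `p*` of `f` on `(0, 1)` satisfies `0.1 < p* < 0.3`. -/
theorem optimal_conditional_probability :
    (∃ p ∈ Set.Ioo (0 : ℝ) 1, ∀ q ∈ Set.Ioo (0 : ℝ) 1,
      (1 - p) / (p * (Real.log p) ^ 2) ≤ (1 - q) / (q * (Real.log q) ^ 2)) ∧
    (∀ p ∈ Set.Ioo (0 : ℝ) 1,
      (∀ q ∈ Set.Ioo (0 : ℝ) 1,
        (1 - p) / (p * (Real.log p) ^ 2) ≤ (1 - q) / (q * (Real.log q) ^ 2)) →
      0.1 < p ∧ p < 0.3) := by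
  set f : ℝ → ℝ := fun q => (1 - q) / (q * (Real.log q) ^ 2) with hf
  have hcont : ContinuousOn f (Icc (0.1:ℝ) 0.3) := by
    intro x hx
    obtain ⟨hx1, hx2⟩ := hx
    have hxpos : (0:ℝ) < x := by norm_num at hx1; linarith
    have hx0 : x ≠ 0 := ne_of_gt hxpos
    have hlogne : Real.log x ≠ 0 := by
      have : Real.log x < 0 := Real.log_neg hxpos (by norm_num at hx2 ⊢; linarith)
      linarith
    apply ContinuousAt.continuousWithinAt
    apply ContinuousAt.div
    · fun_prop
    · exact (continuousAt_id.mul (((Real.continuousAt_log hx0).pow 2)))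
    · positivity
  obtain ⟨p, hpmem, hpmin⟩ := (isCompact_Icc (a := (0.1:ℝ)) (b := 0.3)).exists_isMinOn
    (by norm_num : (Icc (0.1:ℝ) 0.3).Nonempty) hcont
  have hmin' : ∀ x ∈ Icc (0.1:ℝ) 0.3, f p ≤ f x := fun x hx => hpmin hx
  have hp02 : f p ≤ f 0.2 := hmin' 0.2 (by norm_num)
  constructor
  · refine ⟨p, ⟨by norm_num at hpmem ⊢; linarith [hpmem.1],
      by norm_num at hpmem ⊢; linarith [hpmem.2]⟩, ?_⟩
    intro q hq
    by_cases hcase : q ∈ Icc (0.1:ℝ) 0.3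
    · exact hmin' q hcase
    · have hor : q ≤ 0.1 ∨ 0.3 ≤ q := by
        simp only [mem_Icc, not_and_or, not_le] at hcase
        rcases hcase with h | h
        · exact Or.inl h.le
        · exact Or.inr h.le
      have hgt := outside_gt hq.1 hq.2 hor
      calc f p ≤ f 0.2 := hp02
        _ ≤ f q := hgt.le
  · intro p' hp' hglob
    have hle : f p' ≤ f 0.2 := hglob 0.2 (by norm_num)
    constructor
    · by_contra hcon
      push_neg at hcon
      have hgt : f 0.2 < f p' := outside_gt hp'.1 hp'.2 (Or.inl hcon)
      linarith
    · by_contra hcon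
      push_neg at hcon
      have hgt : f 0.2 < f p' := outside_gt hp'.1 hp'.2 (Or.inr hcon)
      linarith
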